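/- arXiv:0904.2714 — 4 statements merged into one kernel-verified Lean document; each statement's English description precedes it below -/
import Mathlib

section
/- Let C be a small category and D a full subcategory. For presheaves F and G on C, the canonical map β_D(F × G) → (β_D F) × (β_D G) is a natural isomorphism; equivalently, (x₁, y₁) ∼_D (x₂, y₂) in (F × G)(X) if and only if x₁ ∼_D x₂ in F(X) and y₁ ∼_D y₂ in G(X). -/
open CategoryTheory Opposite

universe u

/-- The relation `x ∼_D y` on `F(X)`. -/
def simD {C : Type u} [SmallCategory C] (P : C → Prop) (F : Cᵒᵖ ⥤ Type u)
    (X : C) (x y : F.obj (op X)) : Prop :=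
  ∀ (D : C), P D → ∀ j : D ⟶ X, F.map j.op x = F.map j.op y

/-- `β_D` commutes with binary products: a pair of sections `(x₁, y₁)` of the
product presheaf `F × G` is `∼_D`-equivalent to `(x₂, y₂)` if and only if
`x₁ ∼_D x₂` in `F(X)` and `y₁ ∼_D y₂` in `G(X)`, so that
`β_D (F × G) ≅ (β_D F) × (β_D G)`. -/
theorem betaD_prod {C : Type u} [SmallCategory C] (P : C → Prop)
    (F G : Cᵒᵖ ⥤ Type u) (X : C)
    (x₁ x₂ : F.obj (op X)) (y₁ y₂ : G.obj (op X)) :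
    (∀ (D : C), P D → ∀ j : D ⟶ X,
        (F.map j.op x₁, G.map j.op y₁) = (F.map j.op x₂, G.map j.op y₂)) ↔
      (simD P F X x₁ x₂ ∧ simD P G X y₁ y₂) := by
  simp only [simD, Prod.mk.injEq, forall_and]
end

section
/- Let C be a small category, D a full subcategory, and ν : F → G a morphism of presheaves on C which factors through the quotient as ν_D : β_D F → G. Then ν_D is objectwise injective if and only if the restriction of ν to objects of D, i.e., ν_D' : F(D') → G(D') for all D' in D, is injective for every object D' of D. -/
open CategoryTheory Opposite

universe u

theorem Quot.mk_injective_of_rel_imp_eq {α : Sort*} {r : α → α → Prop}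
    (hr : ∀ a b, r a b → a = b) : Function.Injective (Quot.mk r) :=
  fun _ _ h => congrArg (Quot.lift id hr) h

section

variable {C : Type u} [SmallCategory C] {P : C → Prop} {F G : Cᵒᵖ ⥤ Type u}

theorem simD.eq_of_prop {X : C} (hX : P X) {x y : F.obj (op X)} (h : simD P F X x y) :
    x = y := by
  simpa using h X hX (𝟙 X)

theorem simD_of_app_eq {ν : F ⟶ G}
    (hinj : ∀ D' : C, P D' → Function.Injective (ν.app (op D'))) {X : C}
    {x y : F.obj (op X)} (h : ν.app (op X) x = ν.app (op X) y) : simD P F X x y := by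
  intro D' hD' j
  apply hinj D' hD'
  rw [NatTrans.naturality_apply, NatTrans.naturality_apply, h]

end

theorem betaD_factor_injective_iff_general {C : Type u} [SmallCategory C] (P : C → Prop)
    (F G : Cᵒᵖ ⥤ Type u) (ν : F ⟶ G)
    (νD : ∀ X : C, Quot (simD P F X) → G.obj (op X))
    (hνD : ∀ (X : C) (x : F.obj (op X)), νD X (Quot.mk _ x) = ν.app (op X) x) :
    (∀ X : C, Function.Injective (νD X)) ↔
      (∀ D' : C, P D' → Function.Injective (ν.app (op D'))) := by
  constructor
  · intro h D' hD' x y hxy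
    apply Quot.mk_injective_of_rel_imp_eq (fun _ _ => simD.eq_of_prop hD')
    exact h D' (by rw [hνD, hνD, hxy])
  · rintro h X ⟨x⟩ ⟨y⟩ hq
    rw [hνD, hνD] at hq
    exact Quot.sound (simD_of_app_eq h hq)

/-- Let `ν : F ⟶ G` factor through the quotient `F → β_D F` as `ν_D`.  Then
`ν_D` is objectwise injective if and only if the restriction of `ν` to the
objects of `D` is injective. -/
theorem betaD_factor_injective_iff {C : Type u} [SmallCategory C] (P : C → Prop)
    (F G : Cᵒᵖ ⥤ Type u) (ν : F ⟶ G)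
    (hfac : ∀ (X : C) (x y : F.obj (op X)),
      simD P F X x y → ν.app (op X) x = ν.app (op X) y)
    (νD : ∀ X : C, Quot (simD P F X) → G.obj (op X))
    (hνD : ∀ (X : C) (x : F.obj (op X)), νD X (Quot.mk _ x) = ν.app (op X) x) :
    (∀ X : C, Function.Injective (νD X)) ↔
      (∀ D' : C, P D' → Function.Injective (ν.app (op D'))) :=
  betaD_factor_injective_iff_general P F G ν νD hνD
end

section
/- Let G be a finite group, p a prime, n ≥ 0, and X a G-set. Let A_p(G) be the Quillen category of elementary abelian p-subgroups of G and let F_X : A_p(G)^op → Set send E to X^E / C_G(E), the set of C_G(E)-orbits on the E-fixed points of X. Then the coend ∫_{A_p(G)} F_X evaluated at F_p^n is canonically isomorphic, as a set, to Y_n / G, where Y_n is the set of pairs (α : F_p^n → G a homomorphism, x ∈ X^{Im α}) and G acts by conjugation on α and translation on x. -/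
/-!
Both sides are built from pairs `(α, x)` with `x` fixed by the image of `α`: a coend
representative `([x], f : V → E)` gives the pair `(ι_E ∘ f, x)`, and a pair `(α, x)` gives
the representative `([x], α : V → Im α)`. Translating `x` by the centralizer of `E` does not
change the conjugacy class of `ι_E ∘ f`, and a morphism of the Quillen category is a
conjugation, so the first assignment descends to the quotients. Conversely the inclusion
`Im (ι_E ∘ f) ≤ E` is a morphism relating `([x], f)` to the representative of its pair, so the
two maps are mutually inverse.
-/

/-- A subgroup is elementary abelian (for the prime `p`) if it is commutative
and of exponent `p`. -/
def IsElemAbelian (p : ℕ) {G : Type} [Group G] (E : Subgroup G) : Prop :=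
  (∀ x ∈ E, ∀ y ∈ E, x * y = y * x) ∧ ∀ x ∈ E, x ^ p = 1

namespace CoendFixedPoints

variable {G : Type} [Group G] (X V : Type) [MulAction G X] [Group V]

abbrev FixedPts (E : Subgroup G) : Type := {x : X // ∀ g ∈ E, g • x = x}

variable {X} in
def CentralizerRel (E : Subgroup G) (a b : FixedPts X E) : Prop :=
  ∃ c ∈ Subgroup.centralizer (E : Set G), c • a.1 = b.1

/-- A summand `F_X(E) × Hom(V, E)` of the coend, over the subgroups satisfying `P`. -/
abbrev CoendSummand (P : Subgroup G → Prop) : Type :=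
  Σ E : {E : Subgroup G // P E}, Quot (CentralizerRel (X := X) E.1) × (V →* E.1)

/-- The coend identification `(F_X(j)(s), f) ∼ (s, j ∘ f)`, with `j` conjugation by `g`. -/
def CoendRel (P : Subgroup G → Prop) (a b : CoendSummand X V P) : Prop :=
  ∃ g : G, (∀ h ∈ a.1.1, g * h * g⁻¹ ∈ b.1.1) ∧
    (∀ v : V, ((b.2.2 v : G) = g * (a.2.2 v : G) * g⁻¹)) ∧
    ∃ (x : FixedPts X b.1.1) (y : FixedPts X a.1.1),
      a.2.1 = Quot.mk _ y ∧ b.2.1 = Quot.mk _ x ∧ y.1 = g⁻¹ • x.1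

variable (G) in
abbrev FixedPair : Type := {q : (V →* G) × X // ∀ v : V, q.1 v • q.2 = q.2}

variable {X V}

def ConjRel (q₁ q₂ : FixedPair G X V) : Prop :=
  ∃ g : G, (∀ v : V, q₂.1.1 v = g * q₁.1.1 v * g⁻¹) ∧ q₂.1.2 = g • q₁.1.2

def mkPair (E : Subgroup G) (f : V →* E) (x : FixedPts X E) : FixedPair G X V :=
  ⟨(E.subtype.comp f, x.1), fun v => x.2 (f v) (f v).2⟩

theorem conjRel_mkPair_of_centralizerRel {E : Subgroup G} (f : V →* E) {x y : FixedPts X E}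
    (hxy : CentralizerRel E x y) : ConjRel (mkPair E f x) (mkPair E f y) := by
  obtain ⟨c, hc, hcx⟩ := hxy
  refine ⟨c, fun v => ?_, hcx.symm⟩
  have hcomm : (f v : G) * c = c * f v := Subgroup.mem_centralizer_iff.mp hc _ (f v).2
  exact eq_mul_inv_of_mul_eq hcomm

variable {P : Subgroup G → Prop}

def toPairQuot (a : CoendSummand X V P) : Quot (ConjRel (G := G) (X := X) (V := V)) :=
  Quot.lift (fun x => Quot.mk _ (mkPair a.1.1 a.2.2 x))
    (fun _ _ h => Quot.sound (conjRel_mkPair_of_centralizerRel a.2.2 h)) a.2.1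

theorem toPairQuot_eq_of_coendRel {a b : CoendSummand X V P} (hab : CoendRel X V P a b) :
    toPairQuot a = toPairQuot b := by
  obtain ⟨A, qa, fa⟩ := a
  obtain ⟨B, qb, fb⟩ := b
  obtain ⟨g, -, hf, x, y, hqa : qa = Quot.mk (CentralizerRel A.1) y,
    hqb : qb = Quot.mk (CentralizerRel B.1) x, hyx⟩ := hab
  rw [hqa, hqb]
  exact Quot.sound ⟨g, hf, inv_smul_eq_iff.mp hyx.symm⟩

variable (P) in
def ofPair (hP : ∀ α : V →* G, P α.range) (q : FixedPair G X V) : CoendSummand X V P :=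
  ⟨⟨q.1.1.range, hP q.1.1⟩,
    (Quot.mk _ ⟨q.1.2, by rintro _ ⟨v, rfl⟩; exact q.2 v⟩, q.1.1.rangeRestrict)⟩

theorem coendRel_ofPair_of_conjRel (hP : ∀ α : V →* G, P α.range) {q₁ q₂ : FixedPair G X V}
    (h : ConjRel q₁ q₂) : CoendRel X V P (ofPair P hP q₁) (ofPair P hP q₂) := by
  obtain ⟨g, hα, hx⟩ := h
  refine ⟨g, ?_, hα, _, _, rfl, rfl, (inv_smul_eq_iff.mpr hx).symm⟩
  rintro _ ⟨v, rfl⟩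
  exact ⟨v, hα v⟩

theorem coendRel_ofPair_mkPair (hP : ∀ α : V →* G, P α.range) (E : {E : Subgroup G // P E})
    (x : FixedPts X E.1) (f : V →* E.1) :
    CoendRel X V P (ofPair P hP (mkPair E.1 f x)) ⟨E, (Quot.mk _ x, f)⟩ := by
  refine ⟨1, ?_, fun v => by rw [one_mul, inv_one, mul_one]; rfl, x, _, rfl, rfl, by simp [mkPair]⟩
  rintro _ ⟨v, rfl⟩
  simp [mkPair]

theorem mkPair_ofPair (hP : ∀ α : V →* G, P α.range) (q : FixedPair G X V) :
    mkPair (ofPair P hP q).1.1 (ofPair P hP q).2.2 ⟨q.1.2, fun _ ⟨v, hv⟩ => hv ▸ q.2 v⟩ = q :=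
  Subtype.ext (Prod.ext q.1.1.subtype_comp_rangeRestrict rfl)

variable (P) in
def coendEquiv (hP : ∀ α : V →* G, P α.range) :
    Quot (CoendRel X V P) ≃ Quot (ConjRel (G := G) (X := X) (V := V)) where
  toFun := Quot.lift toPairQuot fun _ _ => toPairQuot_eq_of_coendRel
  invFun := Quot.lift (fun q => Quot.mk _ (ofPair P hP q))
    fun _ _ h => Quot.sound (coendRel_ofPair_of_conjRel hP h)
  left_inv := by
    rintro ⟨E, ⟨x⟩, f⟩
    exact Quot.sound (coendRel_ofPair_mkPair hP E x f)
  right_inv := by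
    rintro ⟨q⟩
    exact congrArg (Quot.mk _) (mkPair_ofPair hP q)

theorem coendEquiv_mk (hP : ∀ α : V →* G, P α.range) (E : {E : Subgroup G // P E})
    (x : FixedPts X E.1) (f : V →* E.1) :
    coendEquiv P hP (Quot.mk _ ⟨E, (Quot.mk _ x, f)⟩) = Quot.mk _ (mkPair E.1 f x) :=
  rfl

end CoendFixedPoints

theorem isElemAbelian_range {p : ℕ} {G V : Type} [Group G] [CommGroup V]
    (hV : ∀ v : V, v ^ p = 1) (α : V →* G) : IsElemAbelian p α.range := by
  refine ⟨?_, ?_⟩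
  · rintro _ ⟨u, rfl⟩ _ ⟨v, rfl⟩
    rw [← map_mul, ← map_mul, mul_comm]
  · rintro _ ⟨u, rfl⟩
    rw [← map_pow, hV, map_one]

theorem pow_char_eq_one (p : ℕ) {M : Type} [AddCommGroup M] [Module (ZMod p) M]
    (v : Multiplicative M) : v ^ p = 1 :=
  congrArg Multiplicative.ofAdd (ZModModule.char_nsmul_eq_zero p v.toAdd)

open CoendFixedPoints in
theorem coend_FX_eq_Yn_mod_G_general (p n : ℕ)
    (G : Type) [Group G] (X : Type) [MulAction G X] :
    let V := Multiplicative (Fin n → ZMod p)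
    let Fix : Subgroup G → Type := fun E => {x : X // ∀ g ∈ E, g • x = x}
    let cRel : ∀ E : Subgroup G, Fix E → Fix E → Prop := fun E a b =>
      ∃ c ∈ Subgroup.centralizer (E : Set G), c • a.1 = b.1
    let I := Σ E : {E : Subgroup G // IsElemAbelian p E},
      Quot (cRel E.1) × (V →* E.1)
    let r : I → I → Prop := fun a b =>
      ∃ g : G, (∀ h ∈ a.1.1, g * h * g⁻¹ ∈ b.1.1) ∧
        (∀ v : V, ((b.2.2 v : G) = g * (a.2.2 v : G) * g⁻¹)) ∧
        ∃ (x : Fix b.1.1) (y : Fix a.1.1),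
          a.2.1 = Quot.mk (cRel a.1.1) y ∧ b.2.1 = Quot.mk (cRel b.1.1) x ∧
          y.1 = g⁻¹ • x.1
    let Yn := {q : (V →* G) × X // ∀ v : V, q.1 v • q.2 = q.2}
    let rG : Yn → Yn → Prop := fun y₁ y₂ =>
      ∃ g : G, (∀ v : V, y₂.1.1 v = g * y₁.1.1 v * g⁻¹) ∧ y₂.1.2 = g • y₁.1.2
    ∃ e : Quot r ≃ Quot rG,
      ∀ (E : {E : Subgroup G // IsElemAbelian p E}) (x : Fix E.1) (f : V →* E.1),
        e (Quot.mk r ⟨E, (Quot.mk (cRel E.1) x, f)⟩) =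
          Quot.mk rG ⟨(E.1.subtype.comp f, x.1),
            fun v => x.2 ((f v : G)) (f v).2⟩ := by
  intro V Fix cRel I r Yn rG
  have hP := isElemAbelian_range (G := G) (pow_char_eq_one p (M := Fin n → ZMod p))
  exact ⟨coendEquiv (X := X) _ hP, coendEquiv_mk hP⟩

/-- The coend `∫_{A_p(G)} F_X` of `E ↦ X^E / C_G(E)` over the Quillen category,
evaluated at `F_p^n`, is canonically isomorphic to `Y_n / G`, where `Y_n`
consists of pairs `(α : F_p^n → G, x ∈ X^{Im α})` with `G` acting by
conjugation on `α` and translation on `x`. -/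
theorem coend_FX_eq_Yn_mod_G (p n : ℕ) [Fact p.Prime]
    (G : Type) [Group G] [Finite G] (X : Type) [MulAction G X] :
    let V := Multiplicative (Fin n → ZMod p)
    let Fix : Subgroup G → Type := fun E => {x : X // ∀ g ∈ E, g • x = x}
    let cRel : ∀ E : Subgroup G, Fix E → Fix E → Prop := fun E a b =>
      ∃ c ∈ Subgroup.centralizer (E : Set G), c • a.1 = b.1
    let I := Σ E : {E : Subgroup G // IsElemAbelian p E},
      Quot (cRel E.1) × (V →* E.1)
    let r : I → I → Prop := fun a b =>
      ∃ g : G, (∀ h ∈ a.1.1, g * h * g⁻¹ ∈ b.1.1) ∧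
        (∀ v : V, ((b.2.2 v : G) = g * (a.2.2 v : G) * g⁻¹)) ∧
        ∃ (x : Fix b.1.1) (y : Fix a.1.1),
          a.2.1 = Quot.mk (cRel a.1.1) y ∧ b.2.1 = Quot.mk (cRel b.1.1) x ∧
          y.1 = g⁻¹ • x.1
    let Yn := {q : (V →* G) × X // ∀ v : V, q.1 v • q.2 = q.2}
    let rG : Yn → Yn → Prop := fun y₁ y₂ =>
      ∃ g : G, (∀ v : V, y₂.1.1 v = g * y₁.1.1 v * g⁻¹) ∧ y₂.1.2 = g • y₁.1.2
    ∃ e : Quot r ≃ Quot rG,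
      ∀ (E : {E : Subgroup G // IsElemAbelian p E}) (x : Fix E.1) (f : V →* E.1),
        e (Quot.mk r ⟨E, (Quot.mk (cRel E.1) x, f)⟩) =
          Quot.mk rG ⟨(E.1.subtype.comp f, x.1),
            fun v => x.2 ((f v : G)) (f v).2⟩ :=
  coend_FX_eq_Yn_mod_G_general p n G X
end

section
/- Let n and d be nonnegative integers with n ≥ d, F a field, and S a right End(F^d)-set. Define the presheaf G = i_d S on finite-dimensional F-vector spaces by G(V) = S ×_{End(F^d)} Hom(V, F^d). Then the canonical surjection G → β_{≤n} G is an isomorphism; i.e., if two elements of G(V) agree after restriction along every linear map F^n → V, then they are equal. -/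
/-- The balanced-product relation defining `i_d S (W) = S ×_{End(F^d)} Hom(W, F^d)`:
`(s·m, f) ∼ (s, m ∘ f)`. -/
def iRel (F : Type) [Field F] (d : ℕ) (S : Type)
    (act : S → ((Fin d → F) →ₗ[F] (Fin d → F)) → S)
    (W : Type) [AddCommGroup W] [Module F W] :
    (S × (W →ₗ[F] (Fin d → F))) → (S × (W →ₗ[F] (Fin d → F))) → Prop :=
  fun a b => ∃ (s : S) (m : (Fin d → F) →ₗ[F] (Fin d → F)) (f : W →ₗ[F] (Fin d → F)),
    a = (act s m, f) ∧ b = (s, m ∘ₗ f)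

/-- Restriction of `i_d S` along a linear map `k : F^n → V`, well defined on the
balanced product. -/
def iRes (F : Type) [Field F] (d n : ℕ) (S : Type)
    (act : S → ((Fin d → F) →ₗ[F] (Fin d → F)) → S)
    (V : Type) [AddCommGroup V] [Module F V]
    (k : (Fin n → F) →ₗ[F] V) :
    Quot (iRel F d S act V) → Quot (iRel F d S act (Fin n → F)) :=
  Quot.lift (fun a => Quot.mk _ (a.1, a.2 ∘ₗ k)) (by
    rintro a b ⟨s, m, f, ha, hb⟩
    subst ha; subst hb
    apply Quot.sound
    exact ⟨s, m, f ∘ₗ k, rfl, by rw [LinearMap.comp_assoc]⟩)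

/-!
Write `a = [s, f]` and `b = [t, g]`. Restricting along an endomorphism `φ` of `V` with
`f ∘ φ = f` fixes `a`, and if `rank φ ≤ n` then `φ` factors through `F^n`, so the hypothesis
gives `a|_φ = b|_φ`. One endomorphism fixing `f` and `g` at once may need rank `2d > n`, so
two are used: a projection `p` along `ker f` that preserves `ker g`, and any projection `q`
along `ker g`. Then `a = a|_p = b|_p = [t, g ∘ p]`, which `q` fixes because `p` preserves
`ker g`; hence `a = a|_q = b|_q = b`.
-/

open Module Submodule LinearMap

theorem exists_isCompl_inf_sup_inf_eq {α : Type*} [Lattice α] [BoundedOrder α]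
    [IsModularLattice α] [ComplementedLattice α] (K L : α) :
    ∃ C, IsCompl C K ∧ C ⊓ L ⊔ K ⊓ L = L := by
  obtain ⟨B, hdisj, hsup⟩ :=
    IsModularLattice.exists_disjoint_and_sup_eq (inf_le_right : K ⊓ L ≤ L)
  have hBL : B ≤ L := hsup ▸ le_sup_right
  have hBK : Disjoint B K := by
    rw [disjoint_iff, ← inf_eq_left.2 hBL, inf_assoc, inf_comm L K]
    exact hdisj.symm.eq_bot
  obtain ⟨C, hBC, hC⟩ := hBK.exists_isCompl
  refine ⟨C, hC, le_antisymm (sup_le inf_le_right inf_le_right) ?_⟩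
  calc L = K ⊓ L ⊔ B := hsup.symm
    _ ≤ C ⊓ L ⊔ K ⊓ L := sup_comm (C ⊓ L) _ ▸ sup_le_sup_left (le_inf hBC hBL) _

section Projection

variable {F V W : Type*} [Field F] [AddCommGroup V] [Module F V] [AddCommGroup W] [Module F W]

theorem projection_mem_of_inf_sup_inf_eq {C K L : Submodule F V} (hCK : IsCompl C K)
    (hL : C ⊓ L ⊔ K ⊓ L = L) {v : V} (hv : v ∈ L) : C.projection K hCK v ∈ L := by
  rw [← hL] at hv
  obtain ⟨c, hc, k, hk, rfl⟩ := mem_sup.1 hv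
  rw [map_add, projection_apply_of_mem_left hCK (mem_inf.1 hc).1,
    projection_apply_of_mem_right hCK (mem_inf.1 hk).1, add_zero]
  exact (mem_inf.1 hc).2

theorem comp_projection_ker {C : Submodule F V} (f : V →ₗ[F] W) (hC : IsCompl C (ker f)) :
    f ∘ₗ C.projection (ker f) hC = f := by
  ext v
  have hv := sub_projection_mem hC v
  rw [mem_ker, map_sub, sub_eq_zero] at hv
  exact hv.symm

theorem comp_comp_eq_of_mapsTo_ker {p q : V →ₗ[F] V} {g : V →ₗ[F] W} (hq : g ∘ₗ q = g)
    (hp : ∀ v ∈ ker g, p v ∈ ker g) : (g ∘ₗ p) ∘ₗ q = g ∘ₗ p := by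
  refine LinearMap.ext fun v => ?_
  have hv : p (v - q v) ∈ ker g := hp _ (by rw [mem_ker, map_sub, ← comp_apply, hq, sub_self])
  rw [mem_ker, map_sub, map_sub, sub_eq_zero] at hv
  exact hv.symm

theorem finrank_range_projection_ker [FiniteDimensional F V] {C : Submodule F V}
    (f : V →ₗ[F] W) (hC : IsCompl C (ker f)) :
    finrank F (range (C.projection (ker f) hC)) = finrank F (range f) := by
  have hCf := finrank_add_eq_of_isCompl hC
  have hf := finrank_range_add_finrank_ker f
  rw [range_projection]
  omega

theorem exists_comp_eq_of_finrank_range_le (n : ℕ) (φ : V →ₗ[F] W)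
    [FiniteDimensional F (range φ)] (hφ : finrank F (range φ) ≤ n) :
    ∃ (k : (Fin n → F) →ₗ[F] W) (r : V →ₗ[F] (Fin n → F)), k ∘ₗ r = φ := by
  obtain ⟨ι, hι⟩ := (finrank_le_iff_exists_linearMap (R := F) (M := range φ)
    (M' := Fin n → F)).1 (by simpa using hφ)
  obtain ⟨ρ, hρ⟩ := ι.exists_leftInverse_of_injective (ker_eq_bot.2 hι)
  refine ⟨(range φ).subtype ∘ₗ ρ, ι ∘ₗ φ.rangeRestrict, ?_⟩
  rw [comp_assoc, ← comp_assoc φ.rangeRestrict ι ρ, hρ, id_comp]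
  rfl

end Projection

section Restriction

variable {F : Type} [Field F] {d : ℕ} {S : Type} {act : S → ((Fin d → F) →ₗ[F] (Fin d → F)) → S}
  {W₁ W₂ W₃ : Type} [AddCommGroup W₁] [Module F W₁] [AddCommGroup W₂] [Module F W₂]
  [AddCommGroup W₃] [Module F W₃]

/-- Restriction along any linear map; `iRes F d n S act V k` is definitionally `iRestrict k`. -/
def iRestrict (r : W₁ →ₗ[F] W₂) : Quot (iRel F d S act W₂) → Quot (iRel F d S act W₁) :=
  Quot.lift (fun a => Quot.mk _ (a.1, a.2 ∘ₗ r)) (by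
    rintro _ _ ⟨s, m, f, rfl, rfl⟩
    exact Quot.sound ⟨s, m, f ∘ₗ r, rfl, by rw [comp_assoc]⟩)

theorem iRestrict_comp (r₁ : W₂ →ₗ[F] W₃) (r₂ : W₁ →ₗ[F] W₂) (x : Quot (iRel F d S act W₃)) :
    iRestrict (r₁ ∘ₗ r₂) x = iRestrict r₂ (iRestrict r₁ x) := by
  induction x using Quot.ind
  rfl

theorem iRestrict_mk_of_comp_eq {p : W₁ →ₗ[F] W₁} {f : W₁ →ₗ[F] (Fin d → F)} (s : S)
    (hp : f ∘ₗ p = f) : iRestrict p (Quot.mk (iRel F d S act W₁) (s, f)) = Quot.mk _ (s, f) :=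
  congrArg (fun f' => Quot.mk _ (s, f')) hp

theorem iRestrict_eq_of_forall_iRes_eq {n : ℕ} {a b : Quot (iRel F d S act W₁)}
    (h : ∀ k : (Fin n → F) →ₗ[F] W₁, iRes F d n S act W₁ k a = iRes F d n S act W₁ k b)
    (φ : W₁ →ₗ[F] W₁) [FiniteDimensional F (range φ)] (hφ : finrank F (range φ) ≤ n) :
    iRestrict φ a = iRestrict φ b := by
  obtain ⟨k, r, rfl⟩ := exists_comp_eq_of_finrank_range_le n φ hφ
  rw [iRestrict_comp, iRestrict_comp]
  exact congrArg _ (h k)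

end Restriction

theorem idS_betaLe_iso_general (F : Type) [Field F] (d n : ℕ) (hdn : d ≤ n)
    (S : Type) (act : S → ((Fin d → F) →ₗ[F] (Fin d → F)) → S)
    (V : Type) [AddCommGroup V] [Module F V] [FiniteDimensional F V]
    (a b : Quot (iRel F d S act V))
    (h : ∀ k : (Fin n → F) →ₗ[F] V,
      iRes F d n S act V k a = iRes F d n S act V k b) :
    a = b := by
  obtain ⟨⟨s, f⟩, rfl⟩ := Quot.exists_rep a
  obtain ⟨⟨t, g⟩, rfl⟩ := Quot.exists_rep b
  obtain ⟨C, hC, hCg⟩ := exists_isCompl_inf_sup_inf_eq (ker f) (ker g)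
  obtain ⟨D, hD⟩ : ∃ D, IsCompl D (ker g) :=
    (Submodule.exists_isCompl (ker g)).imp fun _ => IsCompl.symm
  set p := C.projection (ker f) hC
  set q := D.projection (ker g) hD
  have hrank {W : Submodule F V} (u : V →ₗ[F] (Fin d → F)) (hW : IsCompl W (ker u)) :
      finrank F (range (W.projection (ker u) hW)) ≤ n := by
    rw [finrank_range_projection_ker]
    exact ((range u).finrank_le.trans_eq (finrank_fin_fun F)).trans hdn
  have hgpq : (g ∘ₗ p) ∘ₗ q = g ∘ₗ p :=
    comp_comp_eq_of_mapsTo_ker (comp_projection_ker g hD)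
      fun _ => projection_mem_of_inf_sup_inf_eq hC hCg
  have hab : Quot.mk _ (s, f) = Quot.mk (iRel F d S act V) (t, g ∘ₗ p) := by
    rw [← iRestrict_mk_of_comp_eq s (comp_projection_ker f hC),
      iRestrict_eq_of_forall_iRes_eq h p (hrank f hC)]
    rfl
  calc Quot.mk _ (s, f) = Quot.mk _ (t, g ∘ₗ p) := hab
    _ = iRestrict q (Quot.mk _ (t, g ∘ₗ p)) := (iRestrict_mk_of_comp_eq t hgpq).symm
    _ = iRestrict q (Quot.mk _ (s, f)) := by rw [hab]
    _ = iRestrict q (Quot.mk _ (t, g)) := iRestrict_eq_of_forall_iRes_eq h q (hrank g hD)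
    _ = Quot.mk _ (t, g) := iRestrict_mk_of_comp_eq t (comp_projection_ker g hD)

/-- For `n ≥ d`, the canonical surjection `i_d S → β_{≤n} (i_d S)` is an
isomorphism: two elements of `i_d S (V)` which agree after restriction along
every linear map `F^n → V` are equal. -/
theorem idS_betaLe_iso (F : Type) [Field F] (d n : ℕ) (hdn : d ≤ n)
    (S : Type) (act : S → ((Fin d → F) →ₗ[F] (Fin d → F)) → S)
    (h_one : ∀ s, act s LinearMap.id = s)
    (h_mul : ∀ s m₁ m₂, act s (m₁ ∘ₗ m₂) = act (act s m₁) m₂)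
    (V : Type) [AddCommGroup V] [Module F V] [FiniteDimensional F V]
    (a b : Quot (iRel F d S act V))
    (h : ∀ k : (Fin n → F) →ₗ[F] V,
      iRes F d n S act V k a = iRes F d n S act V k b) :
    a = b :=
  idS_betaLe_iso_general F d n hdn S act V a b h
end
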